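/- The rational unit vectors are dense in the unit sphere of EuclideanSpace ℝ (Fin 3). -/

import Mathlib

/-!
If `‖x‖ = ‖p‖` and `x ≠ p`, the reflection in the hyperplane orthogonal to `p - x` sends `p` to
`x`. Reflecting `p` in the hyperplane orthogonal to `a` gives `p - (2 ⟪a, p⟫ / ‖a‖²) a`, which
depends continuously on `a ≠ 0` and has rational coordinates when `p` and `a` do. So if `p` is a
rational point of the sphere, reflecting it in the hyperplanes orthogonal to rational vectors
`a → p - x` gives rational points of the sphere converging to `x`.
-/

open Set Submodule

section Reflection

variable {E : Type*} [NormedAddCommGroup E] [InnerProductSpace ℝ E]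

theorem reflection_orthogonal_singleton_apply (a p : E) :
    reflection (ℝ ∙ a)ᗮ p = p - (2 * (inner ℝ a p / ‖a‖ ^ 2)) • a := by
  rw [reflection_orthogonal_apply, reflection_singleton_apply, RCLike.ofReal_real_eq_id, id]
  module

theorem continuousAt_reflection_orthogonal_singleton (p : E) {a : E} (ha : a ≠ 0) :
    ContinuousAt (fun b : E ↦ reflection (ℝ ∙ b)ᗮ p) a := by
  simp only [reflection_orthogonal_singleton_apply]
  have hnorm : ‖a‖ ^ 2 ≠ 0 := by positivity
  fun_prop (disch := exact hnorm)

theorem mem_closure_image_reflection_orthogonal_singleton {p x : E} (hx : ‖x‖ = ‖p‖)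
    {D : Set E} (hD : Dense D) (hD₀ : 0 ∈ D) :
    x ∈ closure ((fun a : E ↦ reflection (ℝ ∙ a)ᗮ p) '' D) := by
  rcases eq_or_ne x p with rfl | hxp
  · refine subset_closure ⟨0, hD₀, ?_⟩
    simp only [reflection_orthogonal_singleton_apply, smul_zero, sub_zero]
  have hlim := mem_closure_image
    (continuousAt_reflection_orthogonal_singleton p (sub_ne_zero.2 hxp.symm))
    (hD.closure_eq ▸ mem_univ (p - x))
  rwa [reflection_sub hx.symm] at hlim

end Reflection

namespace EuclideanSpace

def rationalPoints (ι : Type*) : Set (EuclideanSpace ℝ ι) :=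
  {y | ∀ i, ∃ q : ℚ, y i = q}

variable {ι : Type*}

theorem dense_rationalPoints : Dense (rationalPoints ι) :=
  ((dense_pi univ fun _ _ ↦ Rat.denseRange_cast).preimage (PiLp.homeomorph 2 _).isOpenMap).mono
    fun _ hy i ↦ (hy i trivial).imp fun _ ↦ Eq.symm

theorem zero_mem_rationalPoints : (0 : EuclideanSpace ℝ ι) ∈ rationalPoints ι :=
  fun _ ↦ ⟨0, by simp⟩

theorem single_mem_rationalPoints [DecidableEq ι] (i : ι) (q : ℚ) :
    single i (q : ℝ) ∈ rationalPoints ι := by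
  intro j
  refine ⟨if j = i then q else 0, ?_⟩
  split_ifs <;> simp [*]

theorem exists_rat_inner_eq [Fintype ι] {a b : EuclideanSpace ℝ ι}
    (ha : a ∈ rationalPoints ι) (hb : b ∈ rationalPoints ι) : ∃ q : ℚ, inner ℝ a b = q := by
  choose qa hqa using ha
  choose qb hqb using hb
  exact ⟨∑ i, qb i * qa i, by simp [PiLp.inner_apply, hqa, hqb]⟩

theorem reflection_mem_rationalPoints [Fintype ι] {a p : EuclideanSpace ℝ ι}
    (ha : a ∈ rationalPoints ι) (hp : p ∈ rationalPoints ι) :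
    reflection (ℝ ∙ a)ᗮ p ∈ rationalPoints ι := by
  obtain ⟨c, hc⟩ := exists_rat_inner_eq ha hp
  obtain ⟨n, hn⟩ := exists_rat_inner_eq ha ha
  rw [real_inner_self_eq_norm_sq] at hn
  intro i
  obtain ⟨qa, hqa⟩ := ha i
  obtain ⟨qp, hqp⟩ := hp i
  exact ⟨qp - 2 * (c / n) * qa, by simp [reflection_orthogonal_singleton_apply, hc, hn, hqa, hqp]⟩

theorem mem_closure_rationalPoints_sphere [Fintype ι] {p x : EuclideanSpace ℝ ι}
    (hp : p ∈ rationalPoints ι) (hx : ‖x‖ = ‖p‖) :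
    x ∈ closure {y | ‖y‖ = ‖p‖ ∧ y ∈ rationalPoints ι} := by
  refine closure_mono ?_ (mem_closure_image_reflection_orthogonal_singleton hx
    dense_rationalPoints zero_mem_rationalPoints)
  rintro _ ⟨a, ha, rfl⟩
  exact ⟨(reflection _).norm_map p, reflection_mem_rationalPoints ha hp⟩

end EuclideanSpace

theorem rational_points_dense_in_sphere
    (x : EuclideanSpace ℝ (Fin 3)) (hx : ‖x‖ = 1) :
    x ∈ closure {y : EuclideanSpace ℝ (Fin 3) |
      ‖y‖ = 1 ∧ ∀ i, ∃ q : ℚ, y i = (q : ℝ)} := by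
  have hpole : ‖EuclideanSpace.single (0 : Fin 3) ((1 : ℚ) : ℝ)‖ = 1 := by simp
  have hx' := EuclideanSpace.mem_closure_rationalPoints_sphere
    (EuclideanSpace.single_mem_rationalPoints 0 1) (hx.trans hpole.symm)
  rwa [hpole] at hx'
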